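/- Let G = {g_1,…,g_M} ⊆ A be a finite set of nonzero elements and let Q = {Q_1,…,Q_N} be an lt-generating set for LtSyz*_A(G), where Q_j = (q_{j,1},…,q_{j,M}). Then G is an SG-basis for the ideal ⟨G⟩_A if and only if for each j = 1,…,N, the element Σ_{i=1}^M q_{j,i}·g_i si-reduces to 0 via G. -/

import Mathlib

open MvPolynomial

/-- A term order on the monomials (exponent vectors) of a polynomial ring in `n`
variables: a well-founded linear order compatible with multiplication of power
products (i.e. with addition of exponent vectors). -/
structure TermOrder (n : ℕ) where
  lo : LinearOrder (Fin n →₀ ℕ)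
  wf : WellFounded lo.lt
  add_le_add : ∀ a b c : Fin n →₀ ℕ, lo.le a b → lo.le (a + c) (b + c)

namespace TermOrder

variable {n : ℕ} {R : Type*} [CommRing R]

/-- `lp p`: the leading power product (exponent vector) of `p`; junk value `0`
for the zero polynomial. -/
noncomputable def lp (ord : TermOrder n) (p : MvPolynomial (Fin n) R) : Fin n →₀ ℕ :=
  WithBot.unbotD 0 (@Finset.max _ ord.lo p.support)

/-- `lc p`: the leading coefficient of `p` (0 if `p = 0`). -/
noncomputable def lc (ord : TermOrder n) (p : MvPolynomial (Fin n) R) : R :=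
  p.coeff (ord.lp p)

/-- `ltm p`: the leading term `lc(p)·lp(p)` of `p` (0 if `p = 0`). -/
noncomputable def ltm (ord : TermOrder n) (p : MvPolynomial (Fin n) R) : MvPolynomial (Fin n) R :=
  monomial (ord.lp p) (ord.lc p)

end TermOrder

variable {n : ℕ} {R : Type*} [CommRing R]

/-- An `F`-power product: a finite product `∏ fᵢ^{eᵢ}` with `fᵢ ∈ F`. -/
def IsPowerProduct (F : Set (MvPolynomial (Fin n) R)) (q : MvPolynomial (Fin n) R) : Prop :=
  ∃ e : MvPolynomial (Fin n) R →₀ ℕ, (e.support : Set (MvPolynomial (Fin n) R)) ⊆ F ∧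
    q = e.prod (fun f k => f ^ k)

/-- `F` is a SAGBI basis for the `R`-subalgebra `A`: `R[Lt A] = R[Lt F]`. -/
def IsSAGBI (ord : TermOrder n) (A : Subalgebra R (MvPolynomial (Fin n) R))
    (F : Set (MvPolynomial (Fin n) R)) : Prop :=
  Algebra.adjoin R (ord.ltm '' (A : Set (MvPolynomial (Fin n) R))) =
    Algebra.adjoin R (ord.ltm '' F)

/-- One step of s-reduction of `g` to `h` via `F`. -/
def SStep (ord : TermOrder n) (F : Set (MvPolynomial (Fin n) R))
    (g h : MvPolynomial (Fin n) R) : Prop :=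
  ∃ (β : Fin n →₀ ℕ) (N : ℕ) (q : Fin N → MvPolynomial (Fin n) R) (r : Fin N → R),
    g.coeff β ≠ 0 ∧
    (∀ i, IsPowerProduct F (q i) ∧ q i ≠ 0 ∧ ord.lp (q i) = β) ∧
    g.coeff β = ∑ i, r i * ord.lc (q i) ∧
    h = g - ∑ i, C (r i) * q i

/-- `g` s-reduces to `h` via `F`: a finite chain of one-step s-reductions. -/
def SReduce (ord : TermOrder n) (F : Set (MvPolynomial (Fin n) R)) :
    MvPolynomial (Fin n) R → MvPolynomial (Fin n) R → Prop :=
  Relation.ReflTransGen (SStep ord F)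

/-- One step of si-reduction of `h` to `h'` via `G`, relative to the subalgebra `A`. -/
def SiStep (ord : TermOrder n) (A : Subalgebra R (MvPolynomial (Fin n) R))
    (G : Set (MvPolynomial (Fin n) R)) (h h' : MvPolynomial (Fin n) R) : Prop :=
  ∃ (α : Fin n →₀ ℕ) (M : ℕ) (g a : Fin M → MvPolynomial (Fin n) R),
    h.coeff α ≠ 0 ∧
    (∀ i, g i ∈ G) ∧ (∀ i, a i ∈ A) ∧
    (∀ i, a i * g i ≠ 0 ∧ ord.lp (a i * g i) = α) ∧
    (monomial α (h.coeff α) : MvPolynomial (Fin n) R) = ∑ i, ord.ltm (a i * g i) ∧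
    h' = h - ∑ i, a i * g i

/-- `h` si-reduces to `h'` via `G`: a finite chain of one-step si-reductions. -/
def SiReduce (ord : TermOrder n) (A : Subalgebra R (MvPolynomial (Fin n) R))
    (G : Set (MvPolynomial (Fin n) R)) :
    MvPolynomial (Fin n) R → MvPolynomial (Fin n) R → Prop :=
  Relation.ReflTransGen (SiStep ord A G)

/-- The subalgebra `R[Lt A]` generated by the leading terms of elements of `A`. -/
noncomputable def LtAlg (ord : TermOrder n) (A : Subalgebra R (MvPolynomial (Fin n) R)) :
    Subalgebra R (MvPolynomial (Fin n) R) :=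
  Algebra.adjoin R (ord.ltm '' (A : Set (MvPolynomial (Fin n) R)))

/-- The leading term of an element of `A`, as an element of `R[Lt A]`. -/
noncomputable def ltA (ord : TermOrder n) (A : Subalgebra R (MvPolynomial (Fin n) R))
    (a : A) : LtAlg ord A :=
  ⟨ord.ltm (a : MvPolynomial (Fin n) R), Algebra.subset_adjoin ⟨a, a.2, rfl⟩⟩

/-- `G ⊆ I` is a SAGBI–Gröbner basis (SG-basis) for the ideal `I` of `A`:
`Lt G` generates the ideal `⟨Lt I⟩` in the subalgebra `R[Lt A]`. -/
def IsSGBasis (ord : TermOrder n) (A : Subalgebra R (MvPolynomial (Fin n) R))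
    (I : Ideal A) (G : Set A) : Prop :=
  Ideal.span
      ((Subtype.val ⁻¹' (ord.ltm '' (Subtype.val '' G)) : Set (LtAlg ord A))) =
  Ideal.span
      ((Subtype.val ⁻¹' (ord.ltm '' (Subtype.val '' (I : Set A))) : Set (LtAlg ord A)))

/-!
Translating `ord` into a Mathlib `MonomialOrder` turns `lp` and `ltm` into `degree` and
`leadingTerm`. Since `Lt A` is closed under products and `R`-multiples, `R[Lt A]` is the `R`-span
of `Lt A`, so every homogeneous component of an element of `R[Lt A]` is the leading term of an
element of `A`: this is how coefficients in `R[Lt A]` are lifted back to `A`.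

(⇒) If `lt h = ∑ bᵢ lt(gᵢ)` with `bᵢ ∈ R[Lt A]`, lifting the right components of the `bᵢ` gives an
si-reduction step that removes the leading term of `h` and stays in `⟨G⟩`; by induction on `lp h`
every element of `⟨G⟩`, in particular each `∑ᵢ q_{j,i} gᵢ`, si-reduces to `0`.

(⇐) Collecting the steps of an si-reduction of `∑ᵢ q_{j,i} gᵢ` to `0` writes it as `∑ᵢ u_{j,i} gᵢ`
with all terms below the degree `α_j` of the homogeneous syzygy `lt(Q_j)`, so `Q_j - U_j` is a
syzygy of `G` lifting `lt(Q_j)`. Let `h = ∑ aᵢ gᵢ` with all `aᵢ gᵢ` of degree `≼ δ`. Either the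
degree-`δ` parts do not cancel, and then `lt h = ∑ lt(aᵢ) lt(gᵢ)` over the top terms, or the top
leading terms form a syzygy of `Lt G`, hence an `R[Lt A]`-combination of the `lt(Q_j)`;
subtracting the same combination of the lifts lowers `δ`, and the term order is well founded.
-/

open scoped MonomialOrder

namespace TermOrder

variable (ord : TermOrder n)

-- A copy of `Fin n →₀ ℕ` for each term order, so that `ord.lo` can be its `LinearOrder` instance.
def Syn (_ : TermOrder n) : Type := Fin n →₀ ℕ

noncomputable instance : AddCommMonoid ord.Syn := inferInstanceAs (AddCommMonoid (Fin n →₀ ℕ))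

instance : IsCancelAdd ord.Syn := inferInstanceAs (IsCancelAdd (Fin n →₀ ℕ))

instance : LinearOrder ord.Syn := ord.lo

instance : IsOrderedAddMonoid ord.Syn where
  add_le_add_left a b h c := ord.add_le_add a b c h

instance : WellFoundedLT ord.Syn := ⟨ord.wf⟩

theorem zero_le_syn (a : ord.Syn) : 0 ≤ a := by
  by_contra! ha
  refine not_strictAnti_of_wellFoundedLT (fun k : ℕ => k • a)
    (strictAnti_nat_of_succ_lt fun k => ?_)
  simpa [succ_nsmul] using add_lt_add_left ha (k • a)

noncomputable def toMonomialOrder : MonomialOrder (Fin n) where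
  syn := ord.Syn
  toSyn := { Equiv.refl _ with map_add' := fun _ _ => rfl }
  toSyn_monotone a b hab := by
    obtain ⟨c, rfl⟩ := exists_add_of_le hab
    exact le_add_of_nonneg_right (α := ord.Syn) (ord.zero_le_syn c)

theorem lp_eq_degree (p : MvPolynomial (Fin n) R) : ord.lp p = ord.toMonomialOrder.degree p := by
  have key (s : Finset ord.toMonomialOrder.syn) : WithBot.unbotD 0 s.max = s.sup id := by
    rcases s.eq_empty_or_nonempty with h | h
    · simp [h]
    · rw [← Finset.coe_max' h, WithBot.unbotD_coe, Finset.max'_eq_sup', Finset.sup'_eq_sup]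
  exact key p.support

theorem ltm_eq_leadingTerm :
    (ord.ltm : MvPolynomial (Fin n) R → MvPolynomial (Fin n) R) =
      ord.toMonomialOrder.leadingTerm := by
  funext p
  rw [ltm, lc, lp_eq_degree, MonomialOrder.leadingTerm, MonomialOrder.leadingCoeff]

end TermOrder

namespace MonomialOrder

variable {σ : Type*} (m : MonomialOrder σ)

theorem degree_eq_of_degree_le_of_coeff_ne_zero {p : MvPolynomial σ R} {δ : σ →₀ ℕ}
    (hp : m.degree p ≼[m] δ) (hδ : p.coeff δ ≠ 0) : m.degree p = δ :=
  m.toSyn.injective (le_antisymm hp (m.le_degree (mem_support_iff.2 hδ)))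

theorem leadingTerm_eq_monomial_of_degree_le {p : MvPolynomial σ R} {δ : σ →₀ ℕ}
    (hp : m.degree p ≼[m] δ) (hδ : p.coeff δ ≠ 0) :
    m.leadingTerm p = monomial δ (p.coeff δ) := by
  rw [leadingTerm, leadingCoeff, m.degree_eq_of_degree_le_of_coeff_ne_zero hp hδ]

theorem degree_le_and_coeff_eq_of_leadingTerm_eq {p : MvPolynomial σ R} {γ : σ →₀ ℕ}
    {c : R} (h : m.leadingTerm p = monomial γ c) : m.degree p ≼[m] γ ∧ p.coeff γ = c := by
  rcases eq_or_ne p 0 with rfl | hp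
  · rw [leadingTerm_zero, eq_comm, monomial_eq_zero] at h
    simp [h]
  · rw [leadingTerm, monomial_eq_monomial_iff] at h
    rcases h with ⟨rfl, rfl⟩ | ⟨h, -⟩
    · exact ⟨le_rfl, rfl⟩
    · exact absurd h (m.leadingCoeff_ne_zero_iff.2 hp)

theorem mem_restrictSupport_lt_iff {p : MvPolynomial σ R} {δ : σ →₀ ℕ} :
    p ∈ restrictSupport R {β | β ≺[m] δ} ↔ m.degree p ≼[m] δ ∧ p.coeff δ = 0 := by
  simp only [mem_restrictSupport_iff, Set.subset_def, Finset.mem_coe, Set.mem_ofPred_eq,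
    m.degree_le_iff]
  refine ⟨fun h => ⟨fun β hβ => (h β hβ).le,
    notMem_support_iff.1 fun hδ => lt_irrefl _ (h δ hδ)⟩,
    fun ⟨h, hδ⟩ β hβ => lt_of_le_of_ne (h β hβ) fun he => ?_⟩
  rw [m.toSyn.injective he] at hβ
  exact mem_support_iff.1 hβ hδ

theorem degree_lt_of_mem_restrictSupport_lt {p : MvPolynomial σ R} {δ : σ →₀ ℕ}
    (hp : p ≠ 0) (h : p ∈ restrictSupport R {β | β ≺[m] δ}) : m.degree p ≺[m] δ :=
  h (m.degree_mem_support hp)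

theorem mem_restrictSupport_lt_of_degree_lt {p : MvPolynomial σ R} {δ : σ →₀ ℕ}
    (h : m.degree p ≺[m] δ) : p ∈ restrictSupport R {β | β ≺[m] δ} :=
  fun _ hβ => lt_of_le_of_lt (m.le_degree hβ) h

theorem degree_sum_le_of_forall {ι : Type*} {s : Finset ι} {f : ι → MvPolynomial σ R}
    {δ : σ →₀ ℕ} (h : ∀ i ∈ s, m.degree (f i) ≼[m] δ) :
    m.degree (∑ i ∈ s, f i) ≼[m] δ :=
  m.degree_sum_le.trans (Finset.sup_le h)

theorem exists_degree_le_degree {ι : Type*} [Fintype ι] {p : ι → MvPolynomial σ R}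
    (h : ∃ i, p i ≠ 0) :
    ∃ i₀, p i₀ ≠ 0 ∧ ∀ i, m.degree (p i) ≼[m] m.degree (p i₀) := by
  classical
  obtain ⟨i₀, hi₀, hmax⟩ := Finset.exists_max_image (Finset.univ.filter fun i => p i ≠ 0)
    (fun i => m.toSyn (m.degree (p i))) (by simpa [Finset.filter_nonempty_iff] using h)
  refine ⟨i₀, (Finset.mem_filter.1 hi₀).2, fun i => ?_⟩
  by_cases hi : p i = 0
  · simp [hi]
  · exact hmax i (by simpa using hi)

theorem degree_mul_le_of_le {f g : MvPolynomial σ R} {a b : σ →₀ ℕ}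
    (hf : m.degree f ≼[m] a) (hg : m.degree g ≼[m] b) : m.degree (f * g) ≼[m] a + b := by
  rw [map_add]
  exact m.degree_mul_le.trans (by rw [map_add]; exact add_le_add hf hg)

theorem leadingTerm_add_eq_monomial {a b : MvPolynomial σ R} {γ : σ →₀ ℕ} {c d : R}
    (ha : m.leadingTerm a = monomial γ c) (hb : m.leadingTerm b = monomial γ d)
    (hcd : c + d ≠ 0) : m.leadingTerm (a + b) = monomial γ (c + d) := by
  obtain ⟨hadeg, rfl⟩ := m.degree_le_and_coeff_eq_of_leadingTerm_eq ha
  obtain ⟨hbdeg, rfl⟩ := m.degree_le_and_coeff_eq_of_leadingTerm_eq hb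
  rw [← coeff_add] at hcd ⊢
  exact m.leadingTerm_eq_monomial_of_degree_le (m.degree_add_le.trans (sup_le hadeg hbdeg)) hcd

section LeadingTermAlgebra

variable (A : Subalgebra R (MvPolynomial σ R))

noncomputable abbrev leadingTermAlgebra : Subalgebra R (MvPolynomial σ R) :=
  Algebra.adjoin R (m.leadingTerm '' (A : Set (MvPolynomial σ R)))

variable [IsDomain R]

theorem toSubmodule_leadingTermAlgebra :
    Subalgebra.toSubmodule (m.leadingTermAlgebra A) =
      Submodule.span R (m.leadingTerm '' (A : Set (MvPolynomial σ R))) := by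
  let S : Submonoid (MvPolynomial σ R) :=
    { carrier := m.leadingTerm '' A
      mul_mem' := by
        rintro _ _ ⟨a, ha, rfl⟩ ⟨b, hb, rfl⟩
        exact ⟨a * b, A.mul_mem ha hb, m.leadingTerm_mul a b⟩
      one_mem' := ⟨1, A.one_mem, by simpa using m.leadingTerm_C (1 : R)⟩ }
  refine Algebra.adjoin_eq_span_of_subset (R := R) ?_
  have hS : (Submonoid.closure (m.leadingTerm '' (A : Set (MvPolynomial σ R))) :
      Set (MvPolynomial σ R)) ⊆ m.leadingTerm '' A := (Submonoid.closure_le (S := S)).2 le_rfl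
  exact hS.trans Submodule.subset_span

theorem exists_leadingTerm_eq_monomial_coeff {x : MvPolynomial σ R}
    (hx : x ∈ m.leadingTermAlgebra A) (γ : σ →₀ ℕ) :
    ∃ a ∈ A, m.leadingTerm a = monomial γ (x.coeff γ) := by
  classical
  rw [← Subalgebra.mem_toSubmodule, toSubmodule_leadingTermAlgebra] at hx
  induction hx using Submodule.span_induction with
  | mem x hx =>
    obtain ⟨a, ha, rfl⟩ := hx
    by_cases hγ : m.degree a = γ
    · exact ⟨a, ha, by simp [leadingTerm, hγ, MvPolynomial.coeff_monomial]⟩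
    · exact ⟨0, A.zero_mem, by simp [leadingTerm, MvPolynomial.coeff_monomial, hγ]⟩
  | zero => exact ⟨0, A.zero_mem, by simp⟩
  | add x y _ _ hx hy =>
    obtain ⟨a, ha, hax⟩ := hx
    obtain ⟨b, hb, hby⟩ := hy
    by_cases hxy : x.coeff γ + y.coeff γ = 0
    · exact ⟨0, A.zero_mem, by simp [hxy]⟩
    · refine ⟨a + b, A.add_mem ha hb, ?_⟩
      rw [coeff_add, m.leadingTerm_add_eq_monomial hax hby hxy]
  | smul r x _ hx =>
    obtain ⟨a, ha, hax⟩ := hx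
    refine ⟨C r * a, A.mul_mem (A.algebraMap_mem r) ha, ?_⟩
    rw [m.leadingTerm_mul, leadingTerm_C, hax, C_mul_monomial, coeff_smul, smul_eq_mul]

/-- `e` lifts to `A` the component of `c` of degree `δ - α` (and is `0` unless `α ≤ δ`). -/
theorem exists_mem_coeff_mul_eq {c : MvPolynomial σ R}
    (hc : c ∈ m.leadingTermAlgebra A) (α δ : σ →₀ ℕ) :
    ∃ e ∈ A, ∀ p : MvPolynomial σ R, m.degree p ≼[m] α →
      m.degree (e * p) ≼[m] δ ∧
        (e * p).coeff δ = (c * monomial α (p.coeff α)).coeff δ := by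
  by_cases hαδ : α ≤ δ
  · obtain ⟨e, he, hlt⟩ := m.exists_leadingTerm_eq_monomial_coeff A hc (δ - α)
    obtain ⟨hdeg, hcoeff⟩ := m.degree_le_and_coeff_eq_of_leadingTerm_eq hlt
    refine ⟨e, he, fun p hp => ?_⟩
    rw [coeff_mul_monomial', if_pos hαδ, ← hcoeff, ← m.coeff_mul_of_add_of_degree_le hdeg hp,
      ← tsub_add_cancel_of_le hαδ, add_tsub_cancel_right]
    exact ⟨m.degree_mul_le_of_le hdeg hp, rfl⟩
  · exact ⟨0, A.zero_mem, fun p _ => by simp [coeff_mul_monomial', hαδ]⟩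

theorem exists_mul_leadingTerm_eq_monomial_coeff {a p : MvPolynomial σ R} (ha : a ∈ A)
    {δ : σ →₀ ℕ} (h : m.degree (a * p) ≼[m] δ) :
    ∃ b ∈ m.leadingTermAlgebra A,
      b * m.leadingTerm p = monomial δ ((a * p).coeff δ) := by
  by_cases hδ : (a * p).coeff δ = 0
  · exact ⟨0, Subalgebra.zero_mem _, by simp [hδ]⟩
  · refine ⟨m.leadingTerm a, Algebra.subset_adjoin ⟨a, ha, rfl⟩, ?_⟩
    rw [← m.leadingTerm_mul, m.leadingTerm_eq_monomial_of_degree_le h hδ]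

end LeadingTermAlgebra

section SyzygyLift

variable {ι κ : Type*} [Fintype ι] [Fintype κ]

/-- Lifting data as in Möller's lifting criterion: `V j` is a syzygy of `g` whose part of top
degree `α j` is the syzygy `q j` of the leading terms of `g`, and the `q j` generate all syzygies
of the leading terms of `g` over `R[Lt A]`. -/
structure IsSyzygyLift (A : Subalgebra R (MvPolynomial σ R)) (g : ι → MvPolynomial σ R)
    (q V : κ → ι → MvPolynomial σ R) (α : κ → σ →₀ ℕ) : Prop where
  mem : ∀ j i, V j i ∈ A
  sum_mul_eq_zero : ∀ j, ∑ i, V j i * g i = 0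
  degree_le : ∀ j i, m.degree (V j i * g i) ≼[m] α j
  mul_leadingTerm_eq : ∀ j i,
    q j i * m.leadingTerm (g i) = monomial (α j) ((V j i * g i).coeff (α j))
  generates : ∀ b : ι → MvPolynomial σ R,
    (∀ i, b i ∈ m.leadingTermAlgebra A) →
    ∑ i, b i * m.leadingTerm (g i) = 0 →
    ∃ c : κ → MvPolynomial σ R,
      (∀ j, c j ∈ m.leadingTermAlgebra A) ∧
      ∀ i, b i = ∑ j, c j * q j i

namespace IsSyzygyLift

variable {m} [IsDomain R] {A : Subalgebra R (MvPolynomial σ R)} {g : ι → MvPolynomial σ R}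
  {q V : κ → ι → MvPolynomial σ R} {α : κ → σ →₀ ℕ}

theorem exists_sum_eq_of_coeff_eq_zero (hL : IsSyzygyLift m A g q V α)
    {a : ι → MvPolynomial σ R} (ha : ∀ i, a i ∈ A) {δ : σ →₀ ℕ}
    (hdeg : ∀ i, m.degree (a i * g i) ≼[m] δ) (hδ : (∑ i, a i * g i).coeff δ = 0) :
    ∃ a' : ι → MvPolynomial σ R, (∀ i, a' i ∈ A) ∧
      ∑ i, a' i * g i = ∑ i, a i * g i ∧
      ∀ i, a' i * g i ∈ restrictSupport R {β | β ≺[m] δ} := by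
  classical
  choose b hbA hb using fun i => m.exists_mul_leadingTerm_eq_monomial_coeff A (ha i) (hdeg i)
  obtain ⟨c, hcA, hc⟩ := hL.generates b hbA (by
    simp_rw [hb, ← map_sum, ← coeff_sum, hδ, map_zero])
  choose e heA he using fun j => m.exists_mem_coeff_mul_eq A (hcA j) (α j) δ
  refine ⟨fun i => a i - ∑ j, e j * V j i, fun i =>
    A.sub_mem (ha i) (A.sum_mem fun j _ => A.mul_mem (heA j) (hL.mem j i)), ?_, fun i => ?_⟩
  · simp only [sub_mul, Finset.sum_sub_distrib, Finset.sum_mul, mul_assoc]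
    rw [Finset.sum_comm]
    simp [← Finset.mul_sum, hL.sum_mul_eq_zero]
  · have hterm (j : κ) := he j (V j i * g i) (hL.degree_le j i)
    simp only [sub_mul, Finset.sum_mul, mul_assoc]
    rw [m.mem_restrictSupport_lt_iff]
    refine ⟨m.degree_sub_le.trans
      (sup_le (hdeg i) (m.degree_sum_le_of_forall fun j _ => (hterm j).1)), ?_⟩
    simp_rw [coeff_sub, coeff_sum, (hterm _).2, ← hL.mul_leadingTerm_eq, ← mul_assoc,
      ← coeff_sum, ← Finset.sum_mul, ← hc, hb]
    simp [MvPolynomial.coeff_monomial]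

theorem exists_leadingTerm_eq_sum (hL : IsSyzygyLift m A g q V α)
    {a : ι → MvPolynomial σ R} (ha : ∀ i, a i ∈ A) :
    ∃ b : ι → MvPolynomial σ R,
      (∀ i, b i ∈ m.leadingTermAlgebra A) ∧
      m.leadingTerm (∑ i, a i * g i) = ∑ i, b i * m.leadingTerm (g i) := by
  suffices key : ∀ δ : σ →₀ ℕ, ∀ a : ι → MvPolynomial σ R, (∀ i, a i ∈ A) →
      (∀ i, m.degree (a i * g i) ≼[m] δ) → ∑ i, a i * g i ≠ 0 →
      ∃ b : ι → MvPolynomial σ R,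
        (∀ i, b i ∈ m.leadingTermAlgebra A) ∧
        m.leadingTerm (∑ i, a i * g i) = ∑ i, b i * m.leadingTerm (g i) by
    rcases eq_or_ne (∑ i, a i * g i) 0 with h0 | h0
    · exact ⟨0, fun _ => Subalgebra.zero_mem _, by simp [h0]⟩
    obtain ⟨i₀, -, hi₀⟩ := m.exists_degree_le_degree (p := fun i => a i * g i)
      (by contrapose! h0; simp [h0])
    exact key _ a ha hi₀ h0
  intro δ
  induction δ using (InvImage.wf m.toSyn wellFounded_lt).induction with
  | _ δ ih =>
  intro a ha hdeg h0
  by_cases hδ : (∑ i, a i * g i).coeff δ = 0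
  · obtain ⟨a', ha', hsum, hlt⟩ := hL.exists_sum_eq_of_coeff_eq_zero ha hdeg hδ
    rw [← hsum] at h0 ⊢
    obtain ⟨i₀, hi₀, hmax⟩ := m.exists_degree_le_degree (p := fun i => a' i * g i)
      (by contrapose! h0; simp [h0])
    exact ih _ (m.degree_lt_of_mem_restrictSupport_lt hi₀ (hlt i₀)) a' ha' hmax h0
  · choose b hbA hb using fun i => m.exists_mul_leadingTerm_eq_monomial_coeff A (ha i) (hdeg i)
    refine ⟨b, hbA, ?_⟩
    rw [m.leadingTerm_eq_monomial_of_degree_le (m.degree_sum_le_of_forall fun i _ => hdeg i) hδ]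
    simp [hb, coeff_sum, map_sum]

end IsSyzygyLift

end SyzygyLift

end MonomialOrder

namespace TermOrder

variable (ord : TermOrder n) {A : Subalgebra R (MvPolynomial (Fin n) R)}
  {ι : Type*} [Fintype ι]

theorem siStep_of_fintype {G : Set (MvPolynomial (Fin n) R)} {κ : Type*} [Fintype κ]
    {a g : κ → MvPolynomial (Fin n) R} (ha : ∀ k, a k ∈ A) (hg : ∀ k, g k ∈ G)
    {h : MvPolynomial (Fin n) R} {δ : Fin n →₀ ℕ} (hne : ∀ k, a k * g k ≠ 0)
    (hdeg : ∀ k, ord.toMonomialOrder.degree (a k * g k) = δ) (hδ : h.coeff δ ≠ 0)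
    (hlt : monomial δ (h.coeff δ) = ∑ k, ord.toMonomialOrder.leadingTerm (a k * g k)) :
    SiStep ord A G h (h - ∑ k, a k * g k) := by
  let e := Fintype.equivFin κ
  refine ⟨δ, Fintype.card κ, g ∘ e.symm, a ∘ e.symm, hδ, fun j => hg _, fun j => ha _,
    fun j => ⟨hne _, by rw [lp_eq_degree]; exact hdeg _⟩, ?_, ?_⟩
  · rw [hlt, ltm_eq_leadingTerm]
    exact (e.symm.sum_comp fun k => ord.toMonomialOrder.leadingTerm (a k * g k)).symm
  · exact congrArg (h - ·) (e.symm.sum_comp fun k => a k * g k).symm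

open Classical in
theorem siStep_sub_sum_filter (g : ι → MvPolynomial (Fin n) R)
    {a : ι → MvPolynomial (Fin n) R} (ha : ∀ i, a i ∈ A) {h : MvPolynomial (Fin n) R}
    {δ : Fin n →₀ ℕ}
    (hdeg : ∀ i, ord.toMonomialOrder.degree (a i * g i) ≼[ord.toMonomialOrder] δ)
    (hδ : h.coeff δ = ∑ i, (a i * g i).coeff δ) (hne : h.coeff δ ≠ 0) :
    SiStep ord A (Set.range g) h (h - ∑ i with (a i * g i).coeff δ ≠ 0, a i * g i) := by
  -- `SiStep` admits only nonzero products, so the terms without a degree-`δ` part are dropped.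
  set T := Finset.univ.filter fun i => (a i * g i).coeff δ ≠ 0
  have hT (k : T) : (a k * g k).coeff δ ≠ 0 := (Finset.mem_filter.1 k.2).2
  rw [← Finset.sum_coe_sort T]
  refine ord.siStep_of_fintype (a := fun k : T => a k) (g := fun k : T => g k) (fun k => ha k)
    (fun k => Set.mem_range_self _) (fun k h0 => hT k (by rw [h0, coeff_zero]))
    (fun k => ord.toMonomialOrder.degree_eq_of_degree_le_of_coeff_ne_zero (hdeg k) (hT k)) hne ?_
  rw [Finset.sum_congr rfl fun (k : T) _ =>
      ord.toMonomialOrder.leadingTerm_eq_monomial_of_degree_le (hdeg k) (hT k),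
    ← map_sum, Finset.sum_coe_sort T fun i => (a i * g i).coeff δ, Finset.sum_filter_ne_zero,
    hδ]

end TermOrder

namespace SiStep

variable {ord : TermOrder n} {A : Subalgebra R (MvPolynomial (Fin n) R)} {ι : Type*} [Fintype ι]
  {g : ι → MvPolynomial (Fin n) R}

theorem exists_sub_eq_sum {h h' : MvPolynomial (Fin n) R}
    {α : Fin n →₀ ℕ} (hstep : SiStep ord A (Set.range g) h h')
    (hh : h ∈ restrictSupport R {β | β ≺[ord.toMonomialOrder] α}) :
    ∃ V : ι → MvPolynomial (Fin n) R, (∀ i, V i ∈ A) ∧ h - h' = ∑ i, V i * g i ∧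
      ∀ i, V i * g i ∈ restrictSupport R {β | β ≺[ord.toMonomialOrder] α} := by
  classical
  obtain ⟨β, M₀, gs, as, hβ, hgs, has, hprod, -, rfl⟩ := hstep
  choose idx hidx using hgs
  have hlt (k : Fin M₀) :
      as k * gs k ∈ restrictSupport R {β | β ≺[ord.toMonomialOrder] α} := by
    refine ord.toMonomialOrder.mem_restrictSupport_lt_of_degree_lt ?_
    rw [← ord.lp_eq_degree, (hprod k).2]
    exact hh (mem_support_iff.2 hβ)
  refine ⟨fun i => ∑ k with idx k = i, as k, fun i => A.sum_mem fun k _ => has k, ?_,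
    fun i => ?_⟩
  · rw [sub_sub_cancel, ← Finset.sum_fiberwise Finset.univ idx]
    refine Finset.sum_congr rfl fun i _ => ?_
    rw [Finset.sum_mul]
    exact Finset.sum_congr rfl fun k hk => by rw [← (Finset.mem_filter.1 hk).2, hidx]
  · rw [Finset.sum_mul]
    exact Submodule.sum_mem _ fun k hk => by rw [← (Finset.mem_filter.1 hk).2, hidx]; exact hlt k

end SiStep

namespace SiReduce

variable {ord : TermOrder n} {A : Subalgebra R (MvPolynomial (Fin n) R)} {ι : Type*} [Fintype ι]
  {g : ι → MvPolynomial (Fin n) R}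

theorem exists_eq_sum {h : MvPolynomial (Fin n) R}
    {α : Fin n →₀ ℕ} (hred : SiReduce ord A (Set.range g) h 0)
    (hh : h ∈ restrictSupport R {β | β ≺[ord.toMonomialOrder] α}) :
    ∃ U : ι → MvPolynomial (Fin n) R, (∀ i, U i ∈ A) ∧ h = ∑ i, U i * g i ∧
      ∀ i, U i * g i ∈ restrictSupport R {β | β ≺[ord.toMonomialOrder] α} := by
  induction hred using Relation.ReflTransGen.head_induction_on with
  | refl => exact ⟨0, fun _ => A.zero_mem, by simp, fun _ => by simp⟩
  | @head h h' hstep _ ih =>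
    obtain ⟨V, hVA, hV, hVlt⟩ := hstep.exists_sub_eq_sum hh
    obtain ⟨U, hUA, hU, hUlt⟩ := ih (by
      rw [← sub_sub_cancel h h', hV]
      exact sub_mem hh (Submodule.sum_mem _ fun i _ => hVlt i))
    refine ⟨U + V, fun i => A.add_mem (hUA i) (hVA i), ?_, fun i => ?_⟩
    · simp only [Pi.add_apply, add_mul, Finset.sum_add_distrib, ← hU, ← hV, add_sub_cancel]
    · rw [Pi.add_apply, add_mul]
      exact add_mem (hUlt i) (hVlt i)

end SiReduce

namespace TermOrder

variable (ord : TermOrder n) {A : Subalgebra R (MvPolynomial (Fin n) R)}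
  {ι : Type*} [Fintype ι]

theorem ltAlg_eq_leadingTermAlgebra (A : Subalgebra R (MvPolynomial (Fin n) R)) :
    LtAlg ord A = ord.toMonomialOrder.leadingTermAlgebra A := by
  rw [LtAlg, ltm_eq_leadingTerm]

theorem exists_lift_of_siReduce [IsDomain R] {g Q : ι → MvPolynomial (Fin n) R}
    {α : Fin n →₀ ℕ} (hQA : ∀ i, Q i ∈ A)
    (hsyz : ∑ i, ord.ltm (Q i) * ord.ltm (g i) = 0)
    (hhom : ∀ i, (ord.ltm (Q i) * ord.ltm (g i)).support ⊆ {α})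
    (hred : SiReduce ord A (Set.range g) (∑ i, Q i * g i) 0) :
    ∃ V : ι → MvPolynomial (Fin n) R, (∀ i, V i ∈ A) ∧ ∑ i, V i * g i = 0 ∧
      ∀ i, ord.toMonomialOrder.degree (V i * g i) ≼[ord.toMonomialOrder] α ∧
        ord.ltm (Q i) * ord.ltm (g i) = monomial α ((V i * g i).coeff α) := by
  classical
  simp only [ltm_eq_leadingTerm, ← MonomialOrder.leadingTerm_mul] at hsyz hhom ⊢
  set m := ord.toMonomialOrder
  have htop (i : ι) : m.leadingTerm (Q i * g i) = monomial α ((Q i * g i).coeff α) := by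
    have h := eq_monomial_of_support_subset_singleton fun d hd => Finset.mem_singleton.1 (hhom i hd)
    rwa [← (m.degree_le_and_coeff_eq_of_leadingTerm_eq h).2] at h
  have hdeg (i : ι) := (m.degree_le_and_coeff_eq_of_leadingTerm_eq (htop i)).1
  have hcoeff : (∑ i, Q i * g i).coeff α = 0 := by
    simpa [coeff_sum, htop, MvPolynomial.coeff_monomial] using congrArg (coeff α) hsyz
  obtain ⟨U, hUA, hU, hUlt⟩ := hred.exists_eq_sum
    (m.mem_restrictSupport_lt_iff.2 ⟨m.degree_sum_le_of_forall fun i _ => hdeg i, hcoeff⟩)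
  refine ⟨Q - U, fun i => A.sub_mem (hQA i) (hUA i), ?_, fun i => ?_⟩
  · simp [sub_mul, Finset.sum_sub_distrib, ← hU]
  · obtain ⟨hUdeg, hUα⟩ := m.mem_restrictSupport_lt_iff.1 (hUlt i)
    rw [Pi.sub_apply, sub_mul, coeff_sub, hUα, sub_zero, htop]
    exact ⟨m.degree_sub_le.trans (sup_le (hdeg i) hUdeg), rfl⟩

theorem exists_isSyzygyLift [IsDomain R] {κ : Type*} [Fintype κ] {g : ι → A}
    {Q : κ → ι → A} {α : κ → Fin n →₀ ℕ}
    (hQsyz : ∀ j, ∑ i, ord.ltm (Q j i : MvPolynomial (Fin n) R) *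
      ord.ltm (g i : MvPolynomial (Fin n) R) = 0)
    (hα : ∀ j i, (ord.ltm (Q j i : MvPolynomial (Fin n) R) *
      ord.ltm (g i : MvPolynomial (Fin n) R)).support ⊆ {α j})
    (hQgen : ∀ b : ι → LtAlg ord A,
      ∑ i, (b i : MvPolynomial (Fin n) R) * ord.ltm (g i : MvPolynomial (Fin n) R) = 0 →
      b ∈ Submodule.span (LtAlg ord A) (Set.range fun j i => ltA ord A (Q j i)))
    (hred : ∀ j, SiReduce ord A (Set.range fun i => (g i : MvPolynomial (Fin n) R))
      (∑ i, (Q j i : MvPolynomial (Fin n) R) * g i) 0) :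
    ∃ V, ord.toMonomialOrder.IsSyzygyLift A (fun i => (g i : MvPolynomial (Fin n) R))
      (fun j i => ord.toMonomialOrder.leadingTerm (Q j i : MvPolynomial (Fin n) R)) V α := by
  choose V hVA hV hVtop using fun j =>
    ord.exists_lift_of_siReduce (fun i => (Q j i).2) (hQsyz j) (hα j) (hred j)
  refine ⟨V, hVA, hV, fun j i => (hVtop j i).1,
    fun j i => by rw [← (hVtop j i).2, ltm_eq_leadingTerm], fun b hb hsum => ?_⟩
  have hb' (i : ι) : b i ∈ LtAlg ord A := by rw [ltAlg_eq_leadingTermAlgebra]; exact hb i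
  obtain ⟨c, hc⟩ := (Submodule.mem_span_range_iff_exists_fun _).1
    (hQgen (fun i => ⟨b i, hb' i⟩) (by rw [ltm_eq_leadingTerm]; exact hsum))
  refine ⟨fun j => c j, fun j => by rw [← ltAlg_eq_leadingTermAlgebra]; exact (c j).2,
    fun i => ?_⟩
  have := congrArg (fun v => (v i : MvPolynomial (Fin n) R)) hc
  simpa [ltA, ltm_eq_leadingTerm] using this.symm

theorem mem_span_ltm_iff (g : ι → A) (x : LtAlg ord A) :
    x ∈ Ideal.span (Subtype.val ⁻¹' (ord.ltm '' (Subtype.val '' Set.range g))) ↔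
      ∃ b : ι → LtAlg ord A, (x : MvPolynomial (Fin n) R) =
        ∑ i, (b i : MvPolynomial (Fin n) R) * ord.ltm (g i : MvPolynomial (Fin n) R) := by
  have hgen : (Subtype.val ⁻¹' (ord.ltm '' (Subtype.val '' Set.range g)) : Set (LtAlg ord A)) =
      Set.range fun i => ltA ord A (g i) := by
    ext y
    constructor
    · rintro ⟨_, ⟨_, ⟨i, rfl⟩, rfl⟩, hy⟩
      exact ⟨i, Subtype.ext hy⟩
    · rintro ⟨i, rfl⟩
      exact ⟨_, ⟨_, ⟨i, rfl⟩, rfl⟩, rfl⟩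
  rw [hgen, Ideal.mem_span_range_iff_exists_fun]
  simp [Subtype.ext_iff, ltA, eq_comm]

theorem isSGBasis_span_iff (g : ι → A) :
    IsSGBasis ord A (Ideal.span (Set.range g)) (Set.range g) ↔
      ∀ h ∈ Ideal.span (Set.range g), ∃ b : ι → LtAlg ord A,
        ord.ltm (h : MvPolynomial (Fin n) R) =
          ∑ i, (b i : MvPolynomial (Fin n) R) * ord.ltm (g i : MvPolynomial (Fin n) R) := by
  rw [IsSGBasis, le_antisymm_iff, and_iff_right (Ideal.span_mono (Set.preimage_mono
    (Set.image_mono (Set.image_mono (Ideal.subset_span (α := A)))))), Ideal.span_le]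
  constructor
  · intro hle h hh
    exact (ord.mem_span_ltm_iff g (ltA ord A h)).1
      (hle (show ltA ord A h ∈ _ from ⟨_, ⟨h, hh, rfl⟩, rfl⟩))
  · rintro H x ⟨_, ⟨h, hh, rfl⟩, hx⟩
    exact (ord.mem_span_ltm_iff g x).2 (hx ▸ H h hh)

theorem exists_siStep_of_ltm_eq_sum [IsDomain R] {g : ι → A} {h : A}
    (hh : h ∈ Ideal.span (Set.range g)) (h0 : (h : MvPolynomial (Fin n) R) ≠ 0)
    {b : ι → LtAlg ord A} (hb : ord.ltm (h : MvPolynomial (Fin n) R) =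
      ∑ i, (b i : MvPolynomial (Fin n) R) * ord.ltm (g i : MvPolynomial (Fin n) R)) :
    ∃ h' ∈ Ideal.span (Set.range g),
      SiStep ord A (Set.range fun i => (g i : MvPolynomial (Fin n) R)) h h' ∧
      (h' : MvPolynomial (Fin n) R) ∈ restrictSupport R
        {β | β ≺[ord.toMonomialOrder] ord.toMonomialOrder.degree h.1} := by
  classical
  rw [ltm_eq_leadingTerm] at hb
  set m := ord.toMonomialOrder
  set δ := m.degree (h : MvPolynomial (Fin n) R)
  choose e heA he using fun i =>
    m.exists_mem_coeff_mul_eq A (by rw [← ltAlg_eq_leadingTermAlgebra]; exact (b i).2)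
      (m.degree (g i).1) δ
  have hdeg (i : ι) := (he i (g i) le_rfl).1
  have hδ : (h : MvPolynomial (Fin n) R).coeff δ = ∑ i, (e i * g i).coeff δ := by
    have hc (i : ι) : (e i * g i).coeff δ =
        (b i * m.leadingTerm (g i : MvPolynomial (Fin n) R)).coeff δ := (he i (g i) le_rfl).2
    simp_rw [hc, ← coeff_sum, ← hb]
    simp [MonomialOrder.leadingTerm, MonomialOrder.leadingCoeff, MvPolynomial.coeff_monomial, δ]
  refine ⟨h - ∑ i with (e i * g i).coeff δ ≠ 0, ⟨e i, heA i⟩ * g i, ?_, ?_, ?_⟩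
  · exact Ideal.sub_mem _ hh
      (Ideal.sum_mem _ fun i _ => Ideal.mul_mem_left _ _ (Ideal.subset_span ⟨i, rfl⟩))
  · push_cast
    exact ord.siStep_sub_sum_filter _ heA hdeg hδ (m.coeff_degree_ne_zero_iff.2 h0)
  · push_cast
    refine m.mem_restrictSupport_lt_iff.2 ⟨m.degree_sub_le.trans (sup_le le_rfl
      (m.degree_sum_le_of_forall fun i _ => hdeg i)), ?_⟩
    rw [coeff_sub, coeff_sum, Finset.sum_filter_ne_zero, hδ, sub_self]

theorem siReduce_zero_of_forall_ltm_eq_sum [IsDomain R] {g : ι → A}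
    (H : ∀ h ∈ Ideal.span (Set.range g), ∃ b : ι → LtAlg ord A,
      ord.ltm (h : MvPolynomial (Fin n) R) =
        ∑ i, (b i : MvPolynomial (Fin n) R) * ord.ltm (g i : MvPolynomial (Fin n) R))
    {h : A} (hh : h ∈ Ideal.span (Set.range g)) :
    SiReduce ord A (Set.range fun i => (g i : MvPolynomial (Fin n) R)) h 0 := by
  set m := ord.toMonomialOrder
  induction hδ : m.degree (h : MvPolynomial (Fin n) R) using
    (InvImage.wf m.toSyn wellFounded_lt).induction generalizing h with
  | _ δ ih =>
  by_cases h0 : (h : MvPolynomial (Fin n) R) = 0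
  · rw [h0]
    exact .refl
  obtain ⟨b, hb⟩ := H h hh
  obtain ⟨h', hh', hstep, hlt⟩ := ord.exists_siStep_of_ltm_eq_sum hh h0 hb
  refine .head hstep ?_
  by_cases h'0 : (h' : MvPolynomial (Fin n) R) = 0
  · rw [h'0]
  exact ih _ (hδ ▸ m.degree_lt_of_mem_restrictSupport_lt h'0 hlt) hh' rfl

end TermOrder

theorem isSGBasis_iff_ltsyzygies_sireduce_zero_general {n : ℕ} {R : Type*} [CommRing R]
    [IsDomain R] (ord : TermOrder n)
    (A : Subalgebra R (MvPolynomial (Fin n) R)) {M N : ℕ}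
    (g : Fin M → A)
    (Q : Fin N → Fin M → A)
    (hQsyz : ∀ j, ∑ i, ord.ltm ((Q j i : MvPolynomial (Fin n) R)) *
      ord.ltm ((g i : MvPolynomial (Fin n) R)) = 0)
    (hQhom : ∀ j, ∃ α : Fin n →₀ ℕ, ∀ i,
      (ord.ltm ((Q j i : MvPolynomial (Fin n) R)) *
        ord.ltm ((g i : MvPolynomial (Fin n) R))).support ⊆ {α})
    (hQgen : ∀ b : Fin M → LtAlg ord A,
      (∑ i, (b i : MvPolynomial (Fin n) R) * ord.ltm ((g i : MvPolynomial (Fin n) R))) = 0 →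
      b ∈ Submodule.span (LtAlg ord A) (Set.range fun j => fun i => ltA ord A (Q j i))) :
    IsSGBasis ord A (Ideal.span (Set.range g)) (Set.range g) ↔
      ∀ j, SiReduce ord A (Subtype.val '' Set.range g)
        (∑ i, ((Q j i : MvPolynomial (Fin n) R)) * ((g i : MvPolynomial (Fin n) R))) 0 := by
  have hG : Subtype.val '' Set.range g = Set.range fun i => (g i : MvPolynomial (Fin n) R) :=
    (Set.range_comp _ _).symm
  rw [ord.isSGBasis_span_iff, hG]
  constructor
  · intro H j
    have hmem : ∑ i, Q j i * g i ∈ Ideal.span (Set.range g) :=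
      Ideal.sum_mem _ fun i _ => Ideal.mul_mem_left _ _ (Ideal.subset_span ⟨i, rfl⟩)
    simpa using ord.siReduce_zero_of_forall_ltm_eq_sum H hmem
  · intro hred h hh
    choose α hα using hQhom
    obtain ⟨V, hL⟩ := ord.exists_isSyzygyLift hQsyz hα hQgen hred
    obtain ⟨a, rfl⟩ := Ideal.mem_span_range_iff_exists_fun.1 hh
    obtain ⟨b, hb, hlt⟩ := hL.exists_leadingTerm_eq_sum fun i => (a i).2
    push_cast
    refine ⟨fun i => ⟨b i, by rw [ord.ltAlg_eq_leadingTermAlgebra]; exact hb i⟩, ?_⟩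
    simpa [ord.ltm_eq_leadingTerm] using hlt

set_option synthInstance.maxHeartbeats 1000000 in
set_option maxHeartbeats 2000000 in
/-- SG-basis criterion.  Let `G = {g₁,…,g_M} ⊆ A` consist of
nonzero elements and let `Q = {Q₁,…,Q_N}` be an lt-generating set for
`LtSyz*_A(G)` (each `lt(Q_j)` is a homogeneous syzygy of `Lt G`, and together
they generate the `R[Lt A]`-module `Syz(Lt G)`).  Then `G` is an SG-basis for
`⟨G⟩_A` iff each `∑ᵢ q_{j,i}·gᵢ` si-reduces to `0` via `G`. -/
theorem isSGBasis_iff_ltsyzygies_sireduce_zero {n : ℕ} {R : Type*} [CommRing R]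
    [IsDomain R] [IsNoetherianRing R] (ord : TermOrder n)
    (A : Subalgebra R (MvPolynomial (Fin n) R)) {M N : ℕ}
    (g : Fin M → A) (hg : ∀ i, (g i : MvPolynomial (Fin n) R) ≠ 0)
    (Q : Fin N → Fin M → A)
    (hQsyz : ∀ j, ∑ i, ord.ltm ((Q j i : MvPolynomial (Fin n) R)) *
      ord.ltm ((g i : MvPolynomial (Fin n) R)) = 0)
    (hQhom : ∀ j, ∃ α : Fin n →₀ ℕ, ∀ i,
      (ord.ltm ((Q j i : MvPolynomial (Fin n) R)) *
        ord.ltm ((g i : MvPolynomial (Fin n) R))).support ⊆ {α})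
    (hQgen : ∀ b : Fin M → LtAlg ord A,
      (∑ i, (b i : MvPolynomial (Fin n) R) * ord.ltm ((g i : MvPolynomial (Fin n) R))) = 0 →
      b ∈ Submodule.span (LtAlg ord A) (Set.range fun j => fun i => ltA ord A (Q j i))) :
    IsSGBasis ord A (Ideal.span (Set.range g)) (Set.range g) ↔
      ∀ j, SiReduce ord A (Subtype.val '' Set.range g)
        (∑ i, ((Q j i : MvPolynomial (Fin n) R)) * ((g i : MvPolynomial (Fin n) R))) 0 :=
  isSGBasis_iff_ltsyzygies_sireduce_zero_general ord A g Q hQsyz hQhom hQgen
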